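/- If the law of the pinning point Z is absolutely continuous with respect to Lebesgue measure, then for any t > 0 with 0 < P(τ > t) < 1 one has E[1_{τ ≤ t} | ζ_t] ≠ 1_{τ ≤ t} with positive probability; hence there exist times t > 0 with {τ ≤ t} ∉ σ(ζ_t) ∨ N_P. -/

import Mathlib

/-!
On `{τ ≤ t}` the bridge has reached its pinning point, `ζ_t = Z`, while on `{τ > t}` it equals
`W_t - (t/τ) W_τ + (t/τ) Z`, which given `(τ, Z) = (r, z)` is Gaussian with variance
`t (r - t) / r > 0`. If `{τ ≤ t}` agreed a.s. with `{ζ_t ∈ S}` for a Borel set `S`, independence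
of `τ` and `Z` would force `Z ∈ S` a.s., so `S` has positive Lebesgue measure; the Gaussian part
then charges `{τ > t, ζ_t ∈ S}`. Both claims produce such an `S`: a conditional expectation that
equals an indicator does, and so does measurability modulo null sets.
-/

open MeasureTheory ProbabilityTheory Real Set

noncomputable def gaussD (v x m : ℝ) : ℝ :=
  (Real.sqrt (2 * Real.pi * v))⁻¹ * Real.exp (-((x - m) ^ 2) / (2 * v))

def IsBrownianMotion {Ω : Type*} [MeasurableSpace Ω] (P : Measure Ω)
    (W : ℝ → Ω → ℝ) : Prop :=
  (∀ ω, W 0 ω = 0) ∧ (∀ ω, Continuous fun t => W t ω) ∧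
  (∀ t, Measurable (W t)) ∧
  (∀ s t : ℝ, 0 ≤ s → s ≤ t →
    P.map (fun ω => W t ω - W s ω) = gaussianReal 0 (t - s).toNNReal) ∧
  (∀ s t u v : ℝ, 0 ≤ s → s ≤ t → t ≤ u → u ≤ v →
    IndepFun (fun ω => W t ω - W s ω) (fun ω => W v ω - W u ω) P)

noncomputable def bridge {Ω : Type*} (W : ℝ → Ω → ℝ) (r z t : ℝ) (ω : Ω) : ℝ :=
  W (min t r) ω - (min t r / r) * W r ω + (min t r / r) * z

noncomputable def rbridge {Ω : Type*} (W : ℝ → Ω → ℝ) (τ Z : Ω → ℝ) (t : ℝ) (ω : Ω) : ℝ :=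
  bridge W (τ ω) (Z ω) t ω

def IndepLPW {Ω : Type*} [MeasurableSpace Ω] (P : Measure Ω) (τ Z : Ω → ℝ)
    (W : ℝ → Ω → ℝ) : Prop :=
  IndepFun τ Z P ∧ IndepFun (fun ω => (τ ω, Z ω)) (fun ω (t : ℝ) => W t ω) P

noncomputable def natFc {Ω : Type*} [MeasurableSpace Ω] (P : Measure Ω)
    (X : ℝ → Ω → ℝ) (t : ℝ) : MeasurableSpace Ω :=
  (⨆ s ∈ Set.Iic t, MeasurableSpace.comap (X s) Real.measurableSpace) ⊔
    MeasurableSpace.generateFrom {s : Set Ω | P s = 0}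


open Filter

namespace MeasureTheory

variable {Ω : Type*} [MeasurableSpace Ω] {μ : Measure Ω}

lemma exists_measurableSet_ae_eq_of_measurableSet_sup_null {m : MeasurableSpace Ω} {s : Set Ω}
    (hs : MeasurableSet[m ⊔ MeasurableSpace.generateFrom {s | μ s = 0}] s) :
    ∃ u, MeasurableSet[m] u ∧ s =ᵐ[μ] u := by
  rw [← @MeasurableSpace.generateFrom_measurableSet _ m,
    MeasurableSpace.generateFrom_sup_generateFrom] at hs
  induction s, hs using MeasurableSpace.generateFrom_induction with
  | hC s hs _ =>
    rcases hs with hs | hs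
    · exact ⟨s, hs, EventuallyEq.rfl⟩
    · exact ⟨∅, MeasurableSet.empty, ae_eq_empty.2 hs⟩
  | empty => exact ⟨∅, MeasurableSet.empty, EventuallyEq.rfl⟩
  | compl s _ ih =>
    obtain ⟨u, hu, hsu⟩ := ih
    exact ⟨uᶜ, hu.compl, hsu.compl⟩
  | iUnion s _ ih =>
    choose u hu hsu using ih
    exact ⟨⋃ i, u i, MeasurableSet.iUnion hu, Filter.EventuallyEq.countable_iUnion hsu⟩

lemma exists_measurableSet_ae_eq_of_ite_ae_eq {m : MeasurableSpace Ω} {p : Ω → Prop}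
    [DecidablePred p] {g : Ω → ℝ} (hg : Measurable[m] g)
    (hpg : g =ᵐ[μ] fun ω => if p ω then 1 else 0) :
    ∃ u, MeasurableSet[m] u ∧ {ω | p ω} =ᵐ[μ] u := by
  refine ⟨g ⁻¹' Set.Ici (1 / 2), hg measurableSet_Ici, ?_⟩
  filter_upwards [hpg] with ω hω
  change p ω = (g ω ∈ Set.Ici (1 / 2))
  by_cases h : p ω <;> norm_num [hω, h]

end MeasureTheory

namespace ProbabilityTheory

variable {Ω α β : Type*} [MeasurableSpace Ω] [MeasurableSpace α] [MeasurableSpace β]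
  {μ : Measure Ω} {X : Ω → α} {Y : Ω → β}

lemma IndepFun.subtype_coind {p : β → Prop} (h : IndepFun X Y μ) (hp : ∀ ω, p (Y ω)) :
    IndepFun X (Subtype.coind Y hp) μ := by
  rw [indepFun_iff_measure_inter_preimage_eq_mul] at h ⊢
  rintro s _ hs ⟨t, ht, rfl⟩
  exact h s t hs ht

lemma IndepFun.measure_prodMk_preimage_eq_lintegral [IsFiniteMeasure μ] (h : IndepFun X Y μ)
    (hX : Measurable X) (hY : Measurable Y) {E : Set (α × β)} (hE : MeasurableSet E) :
    μ ((fun ω => (X ω, Y ω)) ⁻¹' E) = ∫⁻ a, μ.map Y (Prod.mk a ⁻¹' E) ∂μ.map X := by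
  rw [← Measure.map_apply (hX.prodMk hY) hE,
    (indepFun_iff_map_prod_eq_prod_map_map hX.aemeasurable hY.aemeasurable).1 h,
    Measure.prod_apply hE]

end ProbabilityTheory

/- Evaluation `(r, w) ↦ w r` is not measurable on `ℝ → ℝ` with the product σ-algebra, but it is
on the subtype of continuous paths; the path of `W` is therefore viewed there. -/
lemma measurable_continuous_eval :
    Measurable fun p : ℝ × {w : ℝ → ℝ // Continuous w} => p.2.1 p.1 :=
  measurable_uncurry_of_continuous_of_measurable
    (u := fun r (w : {w : ℝ → ℝ // Continuous w}) => w.1 r) (fun w => w.2)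
    fun r => (measurable_pi_apply r).comp measurable_subtype_coe

section Bridge

variable {Ω : Type*} (W : ℝ → Ω → ℝ) {r z t : ℝ} (ω : Ω)

lemma bridge_of_le (hr : r ≠ 0) (hrt : r ≤ t) : bridge W r z t ω = z := by
  rw [bridge, min_eq_right hrt, div_self hr]
  ring

lemma bridge_of_lt (htr : t < r) :
    bridge W r z t ω = W t ω - t / r * W r ω + t / r * z := by
  rw [bridge, min_eq_left htr.le]

end Bridge

lemma measurable_bridge_continuous (t : ℝ) :
    Measurable fun p : (ℝ × ℝ) × {w : ℝ → ℝ // Continuous w} =>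
      bridge (fun s w => w.1 s) p.1.1 p.1.2 t p.2 := by
  have hr : Measurable fun p : (ℝ × ℝ) × {w : ℝ → ℝ // Continuous w} => p.1.1 :=
    measurable_fst.fst
  have hmin : Measurable fun p : (ℝ × ℝ) × {w : ℝ → ℝ // Continuous w} => min t p.1.1 :=
    measurable_const.min hr
  have hWmin := measurable_continuous_eval.comp (hmin.prodMk measurable_snd)
  have hWr := measurable_continuous_eval.comp (hr.prodMk measurable_snd)
  exact (hWmin.sub ((hmin.div hr).mul hWr)).add ((hmin.div hr).mul measurable_fst.snd)

namespace IsBrownianMotion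

variable {Ω : Type*} [MeasurableSpace Ω] {P : Measure Ω} {W : ℝ → Ω → ℝ}

lemma continuous_path (hW : IsBrownianMotion P W) (ω : Ω) : Continuous fun t => W t ω :=
  hW.2.1 ω

lemma measurable (hW : IsBrownianMotion P W) (t : ℝ) : Measurable (W t) :=
  hW.2.2.1 t

lemma map_sub_div_mul_eq_gaussianReal (hW : IsBrownianMotion P W) {t r : ℝ} (ht : 0 ≤ t)
    (htr : t ≤ r) (hr : 0 < r) :
    P.map (fun ω => W t ω - t / r * W r ω) = gaussianReal 0 (t * (r - t) / r).toNNReal := by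
  obtain ⟨hW0, -, hWm, hlaw, hind⟩ := hW
  have hX : P.map (W t) = gaussianReal 0 t.toNNReal := by
    simpa [hW0] using hlaw 0 t le_rfl ht
  have hY : P.map (fun ω => W r ω - W t ω) = gaussianReal 0 (r - t).toNNReal :=
    hlaw t r ht htr
  have hXY : IndepFun (W t) (fun ω => W r ω - W t ω) P := by
    simpa [hW0] using hind 0 t t r le_rfl ht le_rfl htr
  -- `W t - (t / r) W r = (1 - t / r) W t - (t / r) (W r - W t)`, independent centred Gaussians
  have hsum := gaussianReal_add_gaussianReal_of_indepFun
    (hXY.comp (measurable_const_mul (1 - t / r)) (measurable_const_mul (-(t / r))))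
    (gaussianReal_const_mul ⟨(hWm t).aemeasurable, hX⟩ _).map_eq
    (gaussianReal_const_mul ⟨((hWm r).sub (hWm t)).aemeasurable, hY⟩ _).map_eq
  convert hsum using 2
  · ext ω
    simp only [Function.comp_apply, Pi.add_apply]
    ring
  · simp
  · ext
    simp only [NNReal.coe_add, NNReal.coe_mul, NNReal.coe_mk, Real.coe_toNNReal _ ht,
      Real.coe_toNNReal _ (sub_nonneg.2 htr),
      Real.coe_toNNReal _ (div_nonneg (mul_nonneg ht (sub_nonneg.2 htr)) hr.le)]
    field_simp
    ring

lemma measure_bridge_mem_pos [IsProbabilityMeasure P] (hW : IsBrownianMotion P W) {t r : ℝ}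
    (ht : 0 < t) (htr : t < r) (z : ℝ) {S : Set ℝ} (hS : MeasurableSet S)
    (hSvol : volume S ≠ 0) : 0 < P {ω | bridge W r z t ω ∈ S} := by
  have hr : 0 < r := ht.trans htr
  have hvar : (t * (r - t) / r).toNNReal ≠ 0 := by
    simpa using div_pos (mul_pos ht (sub_pos.2 htr)) hr
  have hlaw : HasLaw (fun ω => W t ω - t / r * W r ω + t / r * z)
      (gaussianReal (0 + t / r * z) (t * (r - t) / r).toNNReal) P :=
    gaussianReal_add_const ⟨((hW.measurable t).sub ((hW.measurable r).const_mul _)).aemeasurable,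
      hW.map_sub_div_mul_eq_gaussianReal ht.le htr.le hr⟩ _
  simp_rw [bridge_of_lt W _ htr]
  rw [hlaw.measure_eq (p := (· ∈ S)) hS, pos_iff_ne_zero]
  exact fun h => hSvol (gaussianReal_absolutelyContinuous' _ hvar h)

end IsBrownianMotion

section RandomBridge

variable {Ω : Type*} [MeasurableSpace Ω] {P : Measure Ω} [IsProbabilityMeasure P]
  {W : ℝ → Ω → ℝ} {τ Z : Ω → ℝ} {t : ℝ} {S : Set ℝ}

lemma volume_ne_zero_of_measure_diff_rbridge_preimage_eq_zero (hτ : Measurable τ)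
    (hZ : Measurable Z) (hτpos : ∀ ω, 0 < τ ω) (hτZ : IndepFun τ Z P) (hZac : P.map Z ≪ volume)
    (hlt : P {ω | t < τ ω} < 1) (hS : MeasurableSet S)
    (hAS : P ({ω | τ ω ≤ t} \ rbridge W τ Z t ⁻¹' S) = 0) : volume S ≠ 0 := by
  have hset : τ ⁻¹' Iic t ∩ Z ⁻¹' Sᶜ = {ω | τ ω ≤ t} \ rbridge W τ Z t ⁻¹' S :=
    Set.ext fun ω => and_congr_right fun h => by
      simp [rbridge, bridge_of_le W ω (hτpos ω).ne' h]
  have hle : P (τ ⁻¹' Iic t) ≠ 0 := by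
    have hcompl : τ ⁻¹' Iic t = (τ ⁻¹' Ioi t)ᶜ := by ext; simp
    rw [hcompl, prob_compl_eq_one_sub (hτ measurableSet_Ioi)]
    exact (tsub_pos_of_lt hlt).ne'
  have hZSc : P (Z ⁻¹' Sᶜ) = 0 := by
    have := hτZ.measure_inter_preimage_eq_mul _ _ (measurableSet_Iic (a := t)) hS.compl
    rw [hset, hAS] at this
    exact (mul_eq_zero.1 this.symm).resolve_left hle
  intro hSvol
  have hZS : P (Z ⁻¹' S) = 0 := by
    rw [← Measure.map_apply hZ hS]
    exact hZac hSvol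
  simpa [← Set.preimage_union] using measure_union_null hZS hZSc

lemma measure_lt_inter_rbridge_preimage_pos (hW : IsBrownianMotion P W) (hτ : Measurable τ)
    (hZ : Measurable Z) (hτZW : IndepFun (fun ω => (τ ω, Z ω)) (fun ω (s : ℝ) => W s ω) P)
    (ht : 0 < t) (hpos : 0 < P {ω | t < τ ω}) (hS : MeasurableSet S) (hSvol : volume S ≠ 0) :
    0 < P ({ω | t < τ ω} ∩ rbridge W τ Z t ⁻¹' S) := by
  set Φ : Ω → {w : ℝ → ℝ // Continuous w} := Subtype.coind (fun ω s => W s ω) hW.continuous_path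
  have hΦ : Measurable Φ := (measurable_pi_lambda _ hW.measurable).subtype_mk
  have hτZ : Measurable fun ω => (τ ω, Z ω) := hτ.prodMk hZ
  set E := {p : (ℝ × ℝ) × {w : ℝ → ℝ // Continuous w} |
    t < p.1.1 ∧ bridge (fun s w => w.1 s) p.1.1 p.1.2 t p.2 ∈ S}
  have hE : MeasurableSet E :=
    (measurableSet_lt measurable_const measurable_fst.fst).inter (measurable_bridge_continuous t hS)
  have hslice : ∀ pz : ℝ × ℝ, t < pz.1 → 0 < P.map Φ (Prod.mk pz ⁻¹' E) := fun pz h => by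
    rw [Measure.map_apply hΦ (measurable_prodMk_left hE)]
    exact (hW.measure_bridge_mem_pos ht h pz.2 hS hSvol).trans_le
      (measure_mono fun ω hω => ⟨h, hω⟩)
  have hdisint : P ({ω | t < τ ω} ∩ rbridge W τ Z t ⁻¹' S)
      = ∫⁻ pz, P.map Φ (Prod.mk pz ⁻¹' E) ∂P.map fun ω => (τ ω, Z ω) :=
    (hτZW.subtype_coind hW.continuous_path).measure_prodMk_preimage_eq_lintegral hτZ hΦ hE
  rw [hdisint, lintegral_pos_iff_support (measurable_measure_prodMk_left hE)]
  refine hpos.trans_le ?_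
  rw [show {ω | t < τ ω} = (fun ω => (τ ω, Z ω)) ⁻¹' {pz | t < pz.1} from rfl,
    ← Measure.map_apply hτZ (measurableSet_lt measurable_const measurable_fst)]
  exact measure_mono fun pz h => (hslice pz h).ne'

lemma not_ae_eq_of_measurableSet_comap_rbridge (hW : IsBrownianMotion P W) (hτ : Measurable τ)
    (hZ : Measurable Z) (hτpos : ∀ ω, 0 < τ ω) (hInd : IndepLPW P τ Z W)
    (hZac : P.map Z ≪ volume) (ht : 0 < t) (hpos : 0 < P {ω | t < τ ω})
    (hlt : P {ω | t < τ ω} < 1) {u : Set Ω}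
    (hu : MeasurableSet[MeasurableSpace.comap (rbridge W τ Z t) Real.measurableSpace] u) :
    ¬ {ω | τ ω ≤ t} =ᵐ[P] u := by
  obtain ⟨S, hS, rfl⟩ := hu
  intro hae
  obtain ⟨hAS, hSA⟩ := ae_eq_set.1 hae
  have hSvol := volume_ne_zero_of_measure_diff_rbridge_preimage_eq_zero hτ hZ hτpos hInd.1
    hZac hlt hS hAS
  refine (measure_lt_inter_rbridge_preimage_pos hW hτ hZ hInd.2 ht hpos hS hSvol).ne'
    (measure_mono_null ?_ hSA)
  rintro ω ⟨hω, hζ⟩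
  exact ⟨hζ, (not_le.2 hω : ¬ τ ω ≤ t)⟩

end RandomBridge

theorem stmt10_general {Ω : Type*} [MeasurableSpace Ω] (P : Measure Ω) [IsProbabilityMeasure P]
    (W : ℝ → Ω → ℝ) (hW : IsBrownianMotion P W)
    (τ Z : Ω → ℝ) (hτ : Measurable τ) (hZ : Measurable Z) (hτpos : ∀ ω, 0 < τ ω)
    (hInd : IndepLPW P τ Z W)
    (f : ℝ → ℝ)
    (hZf : P.map Z = volume.withDensity fun x => ENNReal.ofReal (f x)) :
    ∀ t : ℝ, 0 < t → 0 < P {ω | t < τ ω} → P {ω | t < τ ω} < 1 →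
      ¬ (P[(fun ω => if τ ω ≤ t then (1 : ℝ) else 0) |
            MeasurableSpace.comap (rbridge W τ Z t) Real.measurableSpace]
          =ᵐ[P] fun ω => if τ ω ≤ t then (1 : ℝ) else 0) ∧
      ¬ MeasurableSet[MeasurableSpace.comap (rbridge W τ Z t) Real.measurableSpace ⊔
            MeasurableSpace.generateFrom {s : Set Ω | P s = 0}]
          {ω | τ ω ≤ t} := by
  intro t ht hpos hlt
  have hZac : P.map Z ≪ volume := hZf ▸ withDensity_absolutelyContinuous _ _
  have key {u : Set Ω} (hu : MeasurableSet[MeasurableSpace.comap (rbridge W τ Z t) _] u) :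
      ¬ {ω | τ ω ≤ t} =ᵐ[P] u :=
    not_ae_eq_of_measurableSet_comap_rbridge hW hτ hZ hτpos hInd hZac ht hpos hlt hu
  refine ⟨fun hcond => ?_, fun hmeas => ?_⟩
  · obtain ⟨u, hu, hae⟩ :=
      exists_measurableSet_ae_eq_of_ite_ae_eq stronglyMeasurable_condExp.measurable hcond
    exact key hu hae
  · obtain ⟨u, hu, hae⟩ := exists_measurableSet_ae_eq_of_measurableSet_sup_null hmeas
    exact key hu hae

theorem stmt10 {Ω : Type*} [MeasurableSpace Ω] (P : Measure Ω) [IsProbabilityMeasure P]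
    (W : ℝ → Ω → ℝ) (hW : IsBrownianMotion P W)
    (τ Z : Ω → ℝ) (hτ : Measurable τ) (hZ : Measurable Z) (hτpos : ∀ ω, 0 < τ ω)
    (hInd : IndepLPW P τ Z W)
    (f : ℝ → ℝ) (hf : Measurable f)
    (hZf : P.map Z = volume.withDensity fun x => ENNReal.ofReal (f x)) :
    ∀ t : ℝ, 0 < t → 0 < P {ω | t < τ ω} → P {ω | t < τ ω} < 1 →
      ¬ (P[(fun ω => if τ ω ≤ t then (1 : ℝ) else 0) |
            MeasurableSpace.comap (rbridge W τ Z t) Real.measurableSpace]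
          =ᵐ[P] fun ω => if τ ω ≤ t then (1 : ℝ) else 0) ∧
      ¬ MeasurableSet[MeasurableSpace.comap (rbridge W τ Z t) Real.measurableSpace ⊔
            MeasurableSpace.generateFrom {s : Set Ω | P s = 0}]
          {ω | τ ω ≤ t} :=
  stmt10_general P W hW τ Z hτ hZ hτpos hInd f hZf
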